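/- arXiv:math/0208121 — 3 statements merged into one kernel-verified Lean document; each statement's English description precedes it below -/
import Mathlib

section
/- Let λ > 0 and let f ∈ L²(ℝ) be even with f = 0 a.e. on (−λ,λ) and ℱf = 0 a.e. on (−λ,λ). Then: (i) the integral F(s) = ∫₀^∞ f(t) t^{−s} dt converges absolutely for Re(s) > 1/2 and the integral G(s) = ∫₀^∞ (ℱf)(t) t^{−s} dt converges absolutely for Re(s) > 1/2; (ii) there exists an entire function Φ : ℂ → ℂ such that Φ(s) = π^{−s/2} Γ(s/2) F(s) for all s with Re(s) > 1/2 and Φ(s) = π^{−(1−s)/2} Γ((1−s)/2) G(1−s) for all s with Re(s) < 1/2. -/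
open MeasureTheory Complex Set FourierTransform

noncomputable section

/-- `F` is the Fourier–Plancherel transform on `L²(ℝ)`: the unitary operator agreeing with
the Fourier integral `x ↦ ∫ y, exp(2πixy) f y` on integrable square-integrable functions. -/
def IsFourierPlancherel
    (F : Lp ℂ 2 (volume : Measure ℝ) ≃ₗᵢ[ℂ] Lp ℂ 2 (volume : Measure ℝ)) : Prop :=
  ∀ (f : ℝ → ℂ) (_ : Integrable f volume) (hf : MemLp f 2 volume),
    (F (hf.toLp f) : ℝ → ℂ) =ᵐ[volume] (FourierTransformInv.fourierInv f : ℝ → ℂ)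

/-- `P_λ` : multiplication by the indicator function of `(-λ, λ)` on `L²(ℝ)`. -/
def Pproj (lam : ℝ) (f : Lp ℂ 2 (volume : Measure ℝ)) : Lp ℂ 2 (volume : Measure ℝ) :=
  ((Lp.memLp f).indicator (measurableSet_Ioo : MeasurableSet (Ioo (-lam) lam))).toLp _

/-!
For `h ∈ L²(ℝ)` put `θ_h(u) = ∫ h(t) exp(-π u t²) dt`. If `h` vanishes on `(-λ, λ)`, then
`θ_h(u) = O(exp(-πλ²u))` as `u → ∞`. Plancherel applied to the Gaussian gives
`θ_f(u) = u^{-1/2} θ_{ℱf}(1/u)`, so the decay of `θ_{ℱf}` makes `θ_f(u) = O(u^{-b})` for every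
`b` as `u → 0⁺`, and the Mellin transform of `θ_f` is entire. For even `h`, Fubini and the Gamma
integral identify the Mellin transform of `θ_h` at `s/2` with
`2 π^{-s/2} Γ(s/2) ∫₀^∞ h(t) t^{-s} dt` (`Re s > 1/2`), while the inversion `u ↦ 1/u` turns the
Mellin transform of `θ_f` at `s/2` into that of `θ_{ℱf}` at `(1 - s)/2`.
-/

open Filter Asymptotics Topology

def gaussian (u t : ℝ) : ℂ := (Real.exp (-Real.pi * u * t ^ 2) : ℝ)

def gaussPairing (h : ℝ → ℂ) (u : ℝ) : ℂ := ∫ t, h t * gaussian u t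

lemma gaussian_eq_cexp (u t : ℝ) : gaussian u t = cexp (-Real.pi * u * t ^ 2) := by
  simp [gaussian]

lemma norm_gaussian (u t : ℝ) : ‖gaussian u t‖ = Real.exp (-Real.pi * u * t ^ 2) := by
  rw [gaussian, Complex.norm_real, Real.norm_of_nonneg (Real.exp_pos _).le]

lemma gaussian_neg (u t : ℝ) : gaussian u (-t) = gaussian u t := by simp [gaussian]

@[fun_prop]
lemma continuous_gaussian_uncurry : Continuous fun p : ℝ × ℝ => gaussian p.1 p.2 := by
  unfold gaussian; fun_prop

@[fun_prop]
lemma continuous_gaussian (u : ℝ) : Continuous (gaussian u) := by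
  unfold gaussian; fun_prop

lemma integrable_gaussian {u : ℝ} (hu : 0 < u) : Integrable (gaussian u) := by
  have h := integrable_cexp_neg_mul_sq (b := Real.pi * u)
    (by rw [← ofReal_mul, ofReal_re]; positivity)
  refine h.congr (.of_forall fun t => ?_)
  simp [gaussian_eq_cexp]

lemma memLp_gaussian {u : ℝ} (hu : 0 < u) : MemLp (gaussian u) 2 := by
  rw [memLp_two_iff_integrable_sq_norm (continuous_gaussian u).aestronglyMeasurable]
  refine (integrable_gaussian (by positivity : 0 < 2 * u)).norm.congr (.of_forall fun t => ?_)
  simp only [norm_gaussian, ← Real.exp_nat_mul]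
  ring_nf

lemma integrable_mul_gaussian {h : ℝ → ℂ} (hh : MemLp h 2) {u : ℝ} (hu : 0 < u) :
    Integrable fun t => h t * gaussian u t :=
  memLp_one_iff_integrable.mp ((memLp_gaussian hu).smul hh)

lemma norm_gaussian_le {a u lam t : ℝ} (hau : a ≤ u) (ht : lam ^ 2 ≤ t ^ 2) :
    ‖gaussian u t‖ ≤ ‖gaussian a t‖ * Real.exp (-(Real.pi * lam ^ 2) * (u - a)) := by
  rw [norm_gaussian, norm_gaussian, ← Real.exp_add, Real.exp_le_exp]
  nlinarith [mul_le_mul_of_nonneg_left ht (mul_nonneg Real.pi_pos.le (sub_nonneg.2 hau))]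

section Pairing

variable {h : ℝ → ℂ}

lemma continuousOn_gaussPairing (hh : MemLp h 2) : ContinuousOn (gaussPairing h) (Ioi 0) := by
  intro x hx
  refine ContinuousAt.continuousWithinAt (continuousAt_of_dominated
    (bound := fun t => ‖h t * gaussian (x / 2) t‖) ?_ ?_
    (integrable_mul_gaussian hh (half_pos hx)).norm (.of_forall fun t => by fun_prop))
  · exact .of_forall fun u =>
      hh.aestronglyMeasurable.mul (continuous_gaussian u).aestronglyMeasurable
  · filter_upwards [Ioi_mem_nhds (half_lt_self hx)] with u hu
    refine .of_forall fun t => ?_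
    rw [norm_mul, norm_mul]
    gcongr
    simpa using norm_gaussian_le (lam := 0) (t := t) hu.le (by simp [sq_nonneg])

lemma norm_gaussPairing_le {lam : ℝ} (hlam : 0 ≤ lam) (hh : MemLp h 2)
    (h0 : ∀ᵐ x : ℝ, x ∈ Ioo (-lam) lam → h x = 0) {a u : ℝ} (ha : 0 < a) (hau : a ≤ u) :
    ‖gaussPairing h u‖ ≤
      (∫ t, ‖h t * gaussian a t‖) * Real.exp (-(Real.pi * lam ^ 2) * (u - a)) := by
  rw [← integral_mul_const]
  refine norm_integral_le_of_norm_le ((integrable_mul_gaussian hh ha).norm.mul_const _) ?_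
  filter_upwards [h0] with t ht
  by_cases hmem : t ∈ Ioo (-lam) lam
  · simp [ht hmem]
  · have hlt : lam ^ 2 ≤ t ^ 2 := by
      rw [mem_Ioo, not_and_or, not_lt, not_lt] at hmem
      rcases hmem with h1 | h1 <;> nlinarith
    rw [norm_mul, norm_mul, mul_assoc]
    gcongr
    exact norm_gaussian_le hau hlt

lemma gaussPairing_isBigO_atTop {lam : ℝ} (hlam : 0 ≤ lam) (hh : MemLp h 2)
    (h0 : ∀ᵐ x : ℝ, x ∈ Ioo (-lam) lam → h x = 0) :
    gaussPairing h =O[atTop] fun u => Real.exp (-(Real.pi * lam ^ 2) * u) := by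
  refine isBigO_iff.2 ⟨(∫ t, ‖h t * gaussian 1 t‖) * Real.exp (Real.pi * lam ^ 2), ?_⟩
  filter_upwards [eventually_ge_atTop 1] with u hu
  rw [Real.norm_of_nonneg (Real.exp_pos _).le, mul_assoc, ← Real.exp_add]
  convert norm_gaussPairing_le hlam hh h0 one_pos hu using 3
  ring

lemma integrableOn_mul_cpow_neg_Ioi {lam : ℝ} (hlam : 0 < lam) (hh : MemLp h 2)
    (h0 : ∀ᵐ x : ℝ, x ∈ Ioo (-lam) lam → h x = 0) {s : ℂ} (hs : 1 / 2 < s.re) :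
    IntegrableOn (fun t : ℝ => h t * (t : ℂ) ^ (-s)) (Ioi 0) := by
  have hcpow : MemLp (fun t : ℝ => (t : ℂ) ^ (-s)) 2 (volume.restrict (Ioi lam)) := by
    have hcont : ContinuousOn (fun t : ℝ => (t : ℂ) ^ (-s)) (Ioi lam) := fun t ht =>
      (continuousAt_ofReal_cpow_const t (-s) (.inr (hlam.trans ht).ne')).continuousWithinAt
    rw [memLp_two_iff_integrable_sq_norm (hcont.aestronglyMeasurable measurableSet_Ioi)]
    refine (integrableOn_Ioi_rpow_of_lt (by linarith : -(2 * s.re) < -1) hlam).congr_fun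
      (fun t ht => ?_) measurableSet_Ioi
    have ht0 : 0 < t := hlam.trans ht
    rw [norm_cpow_eq_rpow_re_of_pos ht0, neg_re, ← Real.rpow_natCast, ← Real.rpow_mul ht0.le]
    ring_nf
  have hfar : IntegrableOn (fun t : ℝ => h t * (t : ℂ) ^ (-s)) (Ioi lam) :=
    memLp_one_iff_integrable.mp (hcpow.smul (hh.restrict _))
  have hnear : IntegrableOn (fun t : ℝ => h t * (t : ℂ) ^ (-s)) (Ioo 0 lam) := by
    refine integrableOn_zero.congr_fun_ae ?_
    filter_upwards [ae_restrict_mem measurableSet_Ioo, ae_restrict_of_ae h0] with t ht hv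
    rw [hv ⟨by linarith [ht.1], ht.2⟩, zero_mul]
  rw [← Ioc_union_Ioi_eq_Ioi hlam.le]
  exact ((integrableOn_Ioc_iff_integrableOn_Ioo enorm_ne_top).2 hnear).union hfar

end Pairing

lemma integral_eq_two_smul_setIntegral_Ioi {E : Type*} [NormedAddCommGroup E] [NormedSpace ℝ E]
    {g : ℝ → E} (hg : ∀ᵐ x : ℝ, g (-x) = g x) (hi : Integrable g) :
    ∫ x, g x = (2 : ℝ) • ∫ x in Ioi 0, g x := by
  have hIic : ∫ x in Iic 0, g x = ∫ x in Ioi 0, g x := by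
    rw [← neg_zero, ← integral_comp_neg_Ioi, neg_zero]
    exact setIntegral_congr_ae measurableSet_Ioi (hg.mono fun x hx _ => hx)
  rw [← integral_add_compl measurableSet_Iic hi, compl_Iic, hIic, two_smul]

lemma isBigO_rpow_mul_comp_inv_nhdsGT {φ : ℝ → ℂ} {c : ℝ} (hc : 0 < c)
    (hφ : φ =O[atTop] fun u => Real.exp (-c * u)) (a b : ℝ) :
    (fun u : ℝ => ((u ^ a : ℝ) : ℂ) * φ u⁻¹) =O[𝓝[>] 0] fun u => u ^ (-b) := by
  have hφ0 : (fun u => φ u⁻¹) =O[𝓝[>] 0] fun u => Real.exp (-c * u⁻¹) :=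
    hφ.comp_tendsto tendsto_inv_nhdsGT_zero
  have hsmall : (fun u : ℝ => u ^ (a + b) * Real.exp (-c * u⁻¹)) =O[𝓝[>] 0] fun _ => (1 : ℝ) := by
    refine Tendsto.isBigO_one _ (c := (0 : ℝ)) ?_
    refine ((tendsto_rpow_mul_exp_neg_mul_atTop_nhds_zero (-(a + b)) c hc).comp
      tendsto_inv_nhdsGT_zero).congr' ?_
    filter_upwards [self_mem_nhdsWithin] with u (hu : 0 < u)
    simp [Real.inv_rpow hu.le, ← Real.rpow_neg hu.le]
  have hsplit : (fun u : ℝ => u ^ a * Real.exp (-c * u⁻¹)) =ᶠ[𝓝[>] 0]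
      fun u => u ^ (-b) * (u ^ (a + b) * Real.exp (-c * u⁻¹)) := by
    filter_upwards [self_mem_nhdsWithin] with u (hu : 0 < u)
    rw [← mul_assoc, ← Real.rpow_add hu]
    ring_nf
  have := ((isBigO_of_le _ fun u => (norm_real (u ^ a)).le).mul hφ0).trans_eventuallyEq hsplit
  simpa using this.trans ((isBigO_refl (fun u : ℝ => u ^ (-b)) _).mul hsmall)

lemma cpow_one_div_pi_mul_sq {t : ℝ} (ht : 0 < t) (s : ℂ) :
    ((1 / (Real.pi * t ^ 2) : ℝ) : ℂ) ^ (s / 2) = (Real.pi : ℂ) ^ (-s / 2) * (t : ℂ) ^ (-s) := by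
  have hexp : ∀ {x : ℝ}, 0 < x → ∀ w : ℂ, (x : ℂ) ^ w = cexp (Real.log x * w) := fun hx w => by
    rw [cpow_def_of_ne_zero (ofReal_ne_zero.2 hx.ne'), ofReal_log hx.le]
  rw [hexp (by positivity), hexp Real.pi_pos, hexp ht, ← Complex.exp_add, one_div, Real.log_inv,
    Real.log_mul Real.pi_pos.ne' (by positivity), Real.log_pow]
  push_cast
  ring_nf

section GammaIntegral

variable {t : ℝ} {s : ℂ}

lemma norm_cpow_mul_gaussian {u : ℝ} (hu : 0 < u) :
    ‖(u : ℂ) ^ (s / 2 - 1) * gaussian u t‖ =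
      u ^ (s.re / 2 - 1) * Real.exp (-(Real.pi * t ^ 2 * u)) := by
  rw [norm_mul, norm_cpow_eq_rpow_re_of_pos hu, norm_gaussian]
  simp only [sub_re, div_ofNat_re, one_re]
  ring_nf

lemma integrableOn_cpow_mul_gaussian (ht : 0 < t) (hs : 0 < s.re) :
    IntegrableOn (fun u : ℝ => (u : ℂ) ^ (s / 2 - 1) * gaussian u t) (Ioi 0) := by
  have hmeas : AEStronglyMeasurable (fun u : ℝ => (u : ℂ) ^ (s / 2 - 1) * gaussian u t)
      (volume.restrict (Ioi 0)) :=
    (by fun_prop : Measurable fun u : ℝ => (u : ℂ) ^ (s / 2 - 1)).aestronglyMeasurable.mul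
      (continuous_gaussian_uncurry.comp (by fun_prop : Continuous fun u : ℝ => (u, t))
        ).aestronglyMeasurable
  have hgamma := integrableOn_rpow_mul_exp_neg_mul_rpow (p := 1) (s := s.re / 2 - 1)
    (b := Real.pi * t ^ 2) (by linarith) one_pos (by positivity)
  simp only [Real.rpow_one, neg_mul] at hgamma
  exact (integrable_norm_iff hmeas).1 <|
    hgamma.congr_fun (fun u hu => (norm_cpow_mul_gaussian hu).symm) measurableSet_Ioi

lemma integral_cpow_mul_gaussian (ht : 0 < t) (hs : 0 < s.re) :
    ∫ u in Ioi (0 : ℝ), (u : ℂ) ^ (s / 2 - 1) * gaussian u t =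
      (Real.pi : ℂ) ^ (-s / 2) * Complex.Gamma (s / 2) * (t : ℂ) ^ (-s) := by
  have hs2 : 0 < (s / 2).re := by simpa using hs
  rw [show ∫ u in Ioi (0 : ℝ), (u : ℂ) ^ (s / 2 - 1) * gaussian u t =
      ∫ u in Ioi (0 : ℝ), (u : ℂ) ^ (s / 2 - 1) * cexp (-((Real.pi * t ^ 2 : ℝ) * u)) by
        congr 1; ext u; rw [gaussian_eq_cexp]; push_cast; ring_nf,
    integral_cpow_mul_exp_neg_mul_Ioi hs2 (by positivity), ← ofReal_one, ← ofReal_div,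
    cpow_one_div_pi_mul_sq ht]
  ring

lemma integral_norm_cpow_mul_gaussian (ht : 0 < t) (hs : 0 < s.re) :
    ∫ u in Ioi (0 : ℝ), ‖(u : ℂ) ^ (s / 2 - 1) * gaussian u t‖ =
      Real.Gamma (s.re / 2) * ‖(Real.pi : ℂ) ^ (-s / 2) * (t : ℂ) ^ (-s)‖ := by
  rw [setIntegral_congr_fun measurableSet_Ioi fun u hu => norm_cpow_mul_gaussian hu,
    Real.integral_rpow_mul_exp_neg_mul_Ioi (by linarith) (by positivity),
    ← cpow_one_div_pi_mul_sq ht, norm_cpow_eq_rpow_re_of_pos (by positivity)]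
  simp [mul_comm]

lemma integrable_cpow_mul_mul_gaussian {h : ℝ → ℂ} (hm : AEStronglyMeasurable h) (hs : 0 < s.re)
    (hint : IntegrableOn (fun t : ℝ => h t * (t : ℂ) ^ (-s)) (Ioi 0)) :
    Integrable (fun p : ℝ × ℝ => (p.1 : ℂ) ^ (s / 2 - 1) * (h p.2 * gaussian p.1 p.2))
      ((volume.restrict (Ioi 0)).prod (volume.restrict (Ioi 0))) := by
  have hmeas : AEStronglyMeasurable
      (fun p : ℝ × ℝ => (p.1 : ℂ) ^ (s / 2 - 1) * (h p.2 * gaussian p.1 p.2))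
      ((volume.restrict (Ioi 0)).prod (volume.restrict (Ioi 0))) :=
    (by fun_prop : Measurable fun p : ℝ × ℝ => (p.1 : ℂ) ^ (s / 2 - 1)).aestronglyMeasurable.mul
      ((hm.restrict.comp_quasiMeasurePreserving Measure.quasiMeasurePreserving_snd).mul
        continuous_gaussian_uncurry.aestronglyMeasurable)
  rw [integrable_prod_iff' hmeas]
  constructor
  · filter_upwards [ae_restrict_mem measurableSet_Ioi] with t ht
    simpa only [mul_left_comm] using (integrableOn_cpow_mul_gaussian ht hs).const_mul (h t)
  · refine (hint.norm.const_mul (Real.Gamma (s.re / 2) * ‖(Real.pi : ℂ) ^ (-s / 2)‖)).congr ?_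
    filter_upwards [ae_restrict_mem measurableSet_Ioi] with t ht
    have hnorm : (fun u : ℝ => ‖(u : ℂ) ^ (s / 2 - 1) * (h t * gaussian u t)‖) =
        fun u : ℝ => ‖h t‖ * ‖(u : ℂ) ^ (s / 2 - 1) * gaussian u t‖ :=
      funext fun u => by rw [mul_left_comm, norm_mul]
    simp only [hnorm]
    rw [integral_const_mul, integral_norm_cpow_mul_gaussian ht hs, norm_mul, norm_mul]
    ring

lemma mellin_setIntegral_mul_gaussian {h : ℝ → ℂ} (hm : AEStronglyMeasurable h) (hs : 0 < s.re)
    (hint : IntegrableOn (fun t : ℝ => h t * (t : ℂ) ^ (-s)) (Ioi 0)) :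
    mellin (fun u => ∫ t in Ioi 0, h t * gaussian u t) (s / 2) =
      (Real.pi : ℂ) ^ (-s / 2) * Complex.Gamma (s / 2) * ∫ t in Ioi 0, h t * (t : ℂ) ^ (-s) := by
  calc mellin (fun u => ∫ t in Ioi 0, h t * gaussian u t) (s / 2)
      = ∫ u in Ioi (0 : ℝ), ∫ t in Ioi (0 : ℝ), (u : ℂ) ^ (s / 2 - 1) * (h t * gaussian u t) := by
        simp only [mellin, smul_eq_mul, integral_const_mul]
    _ = ∫ t in Ioi (0 : ℝ), ∫ u in Ioi (0 : ℝ), (u : ℂ) ^ (s / 2 - 1) * (h t * gaussian u t) :=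
        integral_integral_swap (integrable_cpow_mul_mul_gaussian hm hs hint)
    _ = ∫ t in Ioi (0 : ℝ),
          (Real.pi : ℂ) ^ (-s / 2) * Complex.Gamma (s / 2) * (h t * (t : ℂ) ^ (-s)) := by
        refine setIntegral_congr_fun measurableSet_Ioi fun t ht => ?_
        simp only [mul_left_comm _ (h t), integral_const_mul, integral_cpow_mul_gaussian ht hs]
    _ = _ := integral_const_mul _ _

end GammaIntegral

lemma mellin_gaussPairing_of_even {h : ℝ → ℂ} (hh : MemLp h 2) (hev : ∀ᵐ x : ℝ, h (-x) = h x)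
    {s : ℂ} (hs : 0 < s.re) (hint : IntegrableOn (fun t : ℝ => h t * (t : ℂ) ^ (-s)) (Ioi 0)) :
    mellin (gaussPairing h) (s / 2) =
      2 * ((Real.pi : ℂ) ^ (-s / 2) * Complex.Gamma (s / 2) *
        ∫ t in Ioi (0 : ℝ), h t * (t : ℂ) ^ (-s)) := by
  have hhalf : mellin (gaussPairing h) (s / 2) =
      mellin (fun u => (2 : ℝ) • ∫ t in Ioi (0 : ℝ), h t * gaussian u t) (s / 2) := by
    refine setIntegral_congr_fun measurableSet_Ioi fun u (hu : 0 < u) => ?_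
    have hev' : ∀ᵐ t : ℝ, h (-t) * gaussian u (-t) = h t * gaussian u t := by
      filter_upwards [hev] with t ht
      rw [ht, gaussian_neg]
    rw [gaussPairing, integral_eq_two_smul_setIntegral_Ioi hev' (integrable_mul_gaussian hh hu)]
  rw [hhalf, mellin_const_smul, mellin_setIntegral_mul_gaussian hh.aestronglyMeasurable hs hint,
    real_smul, ofReal_ofNat]

lemma fourierInv_gaussian {u : ℝ} (hu : 0 < u) (t : ℝ) :
    𝓕⁻ (gaussian u) t = ((u ^ (-(1 / 2) : ℝ) : ℝ) : ℂ) * gaussian u⁻¹ t := by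
  have hcexp : gaussian u = fun x : ℝ => cexp (-Real.pi * (u : ℂ) * (x : ℂ) ^ 2) :=
    funext fun x => gaussian_eq_cexp u x
  rw [Real.fourierInv_eq_fourier_neg, hcexp, fourier_gaussian_pi (by simpa using hu),
    gaussian_eq_cexp, Real.rpow_neg hu.le, ofReal_inv, ofReal_cpow hu.le]
  push_cast
  ring_nf

lemma gaussPairing_eq_inner {u : ℝ} (hu : 0 < u) (g : Lp ℂ 2 (volume : Measure ℝ)) :
    gaussPairing g u = inner ℂ ((memLp_gaussian hu).toLp _) g := by
  rw [L2.inner_def, gaussPairing]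
  refine integral_congr_ae ?_
  filter_upwards [(memLp_gaussian hu).coeFn_toLp] with t ht
  rw [ht, RCLike.inner_apply', gaussian, conj_ofReal, mul_comm]

abbrev reflectL2 : Lp ℂ 2 (volume : Measure ℝ) →ₗᵢ[ℂ] Lp ℂ 2 (volume : Measure ℝ) :=
  Lp.compMeasurePreservingₗᵢ ℂ (fun x : ℝ => -x) (Measure.measurePreserving_neg volume)

lemma coeFn_reflectL2 (g : Lp ℂ 2 (volume : Measure ℝ)) :
    (reflectL2 g : ℝ → ℂ) =ᵐ[volume] fun x => g (-x) :=
  Lp.coeFn_compMeasurePreserving g _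

namespace IsFourierPlancherel

variable {F : Lp ℂ 2 (volume : Measure ℝ) ≃ₗᵢ[ℂ] Lp ℂ 2 (volume : Measure ℝ)}

lemma map_reflectL2_of_integrable (hF : IsFourierPlancherel F) {g : Lp ℂ 2 (volume : Measure ℝ)}
    (hg : Integrable (g : ℝ → ℂ)) : F (reflectL2 g) = reflectL2 (F g) := by
  have hneg := Measure.measurePreserving_neg (volume : Measure ℝ)
  have hg' : MemLp (fun x => g (-x)) 2 := (Lp.memLp g).comp_measurePreserving hneg
  have hR : reflectL2 g = hg'.toLp _ := Lp.ext ((coeFn_reflectL2 g).trans hg'.coeFn_toLp.symm)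
  have hFg := hF g hg (Lp.memLp g)
  rw [Lp.toLp_coeFn] at hFg
  refine Lp.ext ?_
  rw [hR]
  refine (hF _ (hneg.integrable_comp_of_integrable hg) hg').trans ?_
  refine .trans ?_ ((hneg.quasiMeasurePreserving.ae_eq hFg).symm.trans (coeFn_reflectL2 _).symm)
  exact .of_forall fun w => Real.fourierInv_comp_linearIsometry (LinearIsometryEquiv.neg ℝ) g w

lemma map_reflectL2 (hF : IsFourierPlancherel F) (g : Lp ℂ 2 (volume : Measure ℝ)) :
    F (reflectL2 g) = reflectL2 (F g) := by
  induction g using Lp.induction (p := 2) ENNReal.ofNat_ne_top with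
  | indicatorConst c hs hμs =>
    exact hF.map_reflectL2_of_integrable (integrable_indicatorConstLp hs hμs.ne c)
  | add _ _ _ hf hg => simp only [map_add, hf, hg]
  | isClosed =>
    exact isClosed_eq (F.continuous.comp reflectL2.continuous)
      (reflectL2.continuous.comp F.continuous)

lemma ae_even (hF : IsFourierPlancherel F) {g : Lp ℂ 2 (volume : Measure ℝ)}
    (hg : ∀ᵐ x : ℝ, g (-x) = g x) : ∀ᵐ x : ℝ, (F g) (-x) = (F g) x := by
  have hRg : reflectL2 g = g := Lp.ext ((coeFn_reflectL2 g).trans hg)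
  have := coeFn_reflectL2 (F g)
  rw [← hF.map_reflectL2, hRg] at this
  exact this.symm

lemma map_gaussian (hF : IsFourierPlancherel F) {u : ℝ} (hu : 0 < u) :
    F ((memLp_gaussian hu).toLp _) =
      ((u ^ (-(1 / 2) : ℝ) : ℝ) : ℂ) • (memLp_gaussian (inv_pos.2 hu)).toLp _ := by
  refine Lp.ext ((hF _ (integrable_gaussian hu) _).trans ?_)
  filter_upwards [Lp.coeFn_smul (((u ^ (-(1 / 2) : ℝ) : ℝ) : ℂ))
    ((memLp_gaussian (inv_pos.2 hu)).toLp _), (memLp_gaussian (inv_pos.2 hu)).coeFn_toLp]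
    with t h1 h2
  rw [h1, Pi.smul_apply, h2, smul_eq_mul, fourierInv_gaussian hu]

lemma gaussPairing_eq (hF : IsFourierPlancherel F) (g : Lp ℂ 2 (volume : Measure ℝ)) {u : ℝ}
    (hu : 0 < u) : gaussPairing g u = ((u ^ (-(1 / 2) : ℝ) : ℝ) : ℂ) * gaussPairing (F g) u⁻¹ := by
  rw [gaussPairing_eq_inner hu, ← F.inner_map_map, hF.map_gaussian hu, inner_smul_left,
    conj_ofReal, ← gaussPairing_eq_inner (inv_pos.2 hu)]

lemma mellin_gaussPairing (hF : IsFourierPlancherel F) (g : Lp ℂ 2 (volume : Measure ℝ))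
    (w : ℂ) : mellin (gaussPairing g) w = mellin (gaussPairing (F g)) (1 / 2 - w) := by
  rw [show 1 / 2 - w = -(w - 1 / 2) by ring, ← mellin_comp_inv]
  refine setIntegral_congr_fun measurableSet_Ioi fun u (hu : 0 < u) => ?_
  rw [hF.gaussPairing_eq g hu, smul_eq_mul, smul_eq_mul, ← mul_assoc, ofReal_cpow hu.le,
    ← cpow_add _ _ (ofReal_ne_zero.2 hu.ne')]
  congr 2
  push_cast
  ring

lemma differentiable_mellin_gaussPairing (hF : IsFourierPlancherel F) {lam : ℝ} (hlam : 0 < lam)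
    {g : Lp ℂ 2 (volume : Measure ℝ)} (hg0 : ∀ᵐ x : ℝ, x ∈ Ioo (-lam) lam → g x = 0)
    (hFg0 : ∀ᵐ x : ℝ, x ∈ Ioo (-lam) lam → (F g) x = 0) :
    Differentiable ℂ (mellin (gaussPairing g)) := by
  have hc : 0 < Real.pi * lam ^ 2 := by positivity
  have hbot (b : ℝ) : gaussPairing g =O[𝓝[>] 0] fun u => u ^ (-b) := by
    refine (isBigO_rpow_mul_comp_inv_nhdsGT hc
      (gaussPairing_isBigO_atTop hlam.le (Lp.memLp (F g)) hFg0) (-(1 / 2)) b).congr' ?_ .rfl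
    filter_upwards [self_mem_nhdsWithin] with u (hu : 0 < u)
    exact (hF.gaussPairing_eq g hu).symm
  exact fun w => mellin_differentiableAt_of_isBigO_rpow_exp hc
    ((continuousOn_gaussPairing (Lp.memLp g)).locallyIntegrableOn measurableSet_Ioi)
    (gaussPairing_isBigO_atTop hlam.le (Lp.memLp g) hg0) (hbot (w.re - 1)) (by linarith)

end IsFourierPlancherel

/-- Functional equation for square-integrable even Sonine functions: the right Mellin
transforms converge for `Re(s) > 1/2` and glue, via the completed Mellin transforms,
into a single entire function. -/
theorem sonine_mellin_functional_equation (lam : ℝ) (hlam : 0 < lam)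
    (F : Lp ℂ 2 (volume : Measure ℝ) ≃ₗᵢ[ℂ] Lp ℂ 2 (volume : Measure ℝ))
    (hF : IsFourierPlancherel F)
    (f : Lp ℂ 2 (volume : Measure ℝ))
    (heven : ∀ᵐ x : ℝ, f (-x) = f x)
    (hf0 : ∀ᵐ x : ℝ, x ∈ Ioo (-lam) lam → f x = 0)
    (hFf0 : ∀ᵐ x : ℝ, x ∈ Ioo (-lam) lam → (F f) x = 0) :
    (∀ s : ℂ, 1/2 < s.re →
        IntegrableOn (fun t : ℝ => f t * (t : ℂ) ^ (-s)) (Ioi 0) volume ∧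
        IntegrableOn (fun t : ℝ => (F f) t * (t : ℂ) ^ (-s)) (Ioi 0) volume) ∧
    ∃ Φ : ℂ → ℂ, Differentiable ℂ Φ ∧
      (∀ s : ℂ, 1/2 < s.re →
        Φ s = (Real.pi : ℂ) ^ (-s/2) * Complex.Gamma (s/2) *
          ∫ t in Ioi (0 : ℝ), f t * (t : ℂ) ^ (-s)) ∧
      (∀ s : ℂ, s.re < 1/2 →
        Φ s = (Real.pi : ℂ) ^ (-(1-s)/2) * Complex.Gamma ((1-s)/2) *
          ∫ t in Ioi (0 : ℝ), (F f) t * (t : ℂ) ^ (-(1-s))) := by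
  have hint (g : Lp ℂ 2 (volume : Measure ℝ)) (hg0 : ∀ᵐ x : ℝ, x ∈ Ioo (-lam) lam → g x = 0)
      (s : ℂ) (hs : 1 / 2 < s.re) : IntegrableOn (fun t : ℝ => g t * (t : ℂ) ^ (-s)) (Ioi 0) :=
    integrableOn_mul_cpow_neg_Ioi hlam (Lp.memLp g) hg0 hs
  refine ⟨fun s hs => ⟨hint f hf0 s hs, hint (F f) hFf0 s hs⟩,
    fun s => mellin (gaussPairing f) (s / 2) / 2, ?_, fun s hs => ?_, fun s hs => ?_⟩
  · exact ((hF.differentiable_mellin_gaussPairing hlam hf0 hFf0).comp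
      (differentiable_id.div_const 2)).div_const 2
  · dsimp only
    rw [mellin_gaussPairing_of_even (Lp.memLp f) heven (by linarith) (hint f hf0 s hs)]
    ring
  · have hs' : 1 / 2 < (1 - s).re := by rw [sub_re, one_re]; linarith
    dsimp only
    rw [hF.mellin_gaussPairing, show 1 / 2 - s / 2 = (1 - s) / 2 by ring,
      mellin_gaussPairing_of_even (Lp.memLp (F f)) (hF.ae_even heven) (by linarith)
        (hint (F f) hFf0 (1 - s) hs')]
    ring
end
end

section
/- Let λ > 0 and let f ∈ L²(ℝ) be even. Then P_λ f + ℱ P_λ ℱ⁻¹ f = 0 in L²(ℝ) if and only if f is a Sonine function, i.e. f = 0 a.e. on (−λ,λ) and ℱf = 0 a.e. on (−λ,λ). In particular K_λ is the kernel of P_λ + ℱ P_λ ℱ⁻¹ on the even subspace of L²(ℝ). -/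
/-! Schwartz functions are dense in `L²(ℝ)` and the hypothesis on `F` fixes `F` on them, so `F` is
the `L²` inverse Fourier transform. Hence `F ∘ F` is the reflection `f ↦ f(-·)`, and
`F⁻¹ f = F f` when `f` is even. Pairing `P_λ f + F P_λ F⁻¹ f` with `f` gives
`‖P_λ f‖² + ‖P_λ F⁻¹ f‖²`, because `F` is unitary and `P_λ` is an orthogonal projection. So the
sum vanishes exactly when `P_λ f = 0` and `P_λ F f = 0`. -/

open MeasureTheory Complex Set FourierTransform

noncomputable section

section Reflection

variable {V E : Type*} [NormedAddCommGroup V] [InnerProductSpace ℝ V] [FiniteDimensional ℝ V]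
  [MeasurableSpace V] [BorelSpace V] [NormedAddCommGroup E]

namespace MeasureTheory.Lp

abbrev reflect {p : ENNReal} : Lp E p (volume : Measure V) →+ Lp E p (volume : Measure V) :=
  compMeasurePreserving Neg.neg (Measure.measurePreserving_neg volume)

theorem reflect_eq_self {p : ENNReal} {f : Lp E p (volume : Measure V)}
    (heven : ∀ᵐ x : V, f (-x) = f x) : reflect f = f :=
  Lp.ext ((coeFn_compMeasurePreserving f _).trans heven)

end MeasureTheory.Lp

variable [InnerProductSpace ℂ E] [CompleteSpace E]

theorem SchwartzMap.fourierInv_fourierInv_apply (φ : SchwartzMap V E) (x : V) :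
    𝓕⁻ (𝓕⁻ φ) x = φ (-x) := by
  rw [SchwartzMap.fourierInv_apply_eq (𝓕⁻ φ)]
  simp

theorem MeasureTheory.Lp.fourierInv_fourierInv (f : Lp E 2 (volume : Measure V)) :
    𝓕⁻ (𝓕⁻ f) = reflect f := by
  refine (SchwartzMap.denseRange_toLpCLM (p := 2) ENNReal.ofNat_ne_top).induction_on f
    (isClosed_eq (by fun_prop) (isometry_compMeasurePreserving _).continuous) fun φ ↦ ?_
  simp only [SchwartzMap.toLpCLM_apply, SchwartzMap.toLp_fourierInv_eq]
  refine Lp.ext (((𝓕⁻ (𝓕⁻ φ)).coeFn_toLp 2).trans ?_)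
  have hneg := Measure.measurePreserving_neg (volume : Measure V)
  filter_upwards [coeFn_compMeasurePreserving (φ.toLp 2) hneg,
    hneg.quasiMeasurePreserving.ae_eq_comp (φ.coeFn_toLp 2)] with x h1 h2
  rw [h1, h2, Function.comp_apply, SchwartzMap.fourierInv_fourierInv_apply]

end Reflection

namespace IsFourierPlancherel

variable {F : Lp ℂ 2 (volume : Measure ℝ) ≃ₗᵢ[ℂ] Lp ℂ 2 (volume : Measure ℝ)}

theorem apply_toLp_schwartz (hF : IsFourierPlancherel F) (φ : SchwartzMap ℝ ℂ) :
    F (φ.toLp 2) = (𝓕⁻ φ).toLp 2 := by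
  refine Lp.ext ((hF φ φ.integrable (φ.memLp 2)).trans ?_)
  rw [← SchwartzMap.fourierInv_coe]
  exact ((𝓕⁻ φ).coeFn_toLp 2).symm

theorem apply_eq_fourierInv (hF : IsFourierPlancherel F) (f : Lp ℂ 2 (volume : Measure ℝ)) :
    F f = 𝓕⁻ f :=
  (SchwartzMap.denseRange_toLpCLM (p := 2) ENNReal.ofNat_ne_top).induction_on f
    (isClosed_eq F.continuous ContinuousFourierInv.continuous_fourierInv)
    fun φ ↦ by simp [hF.apply_toLp_schwartz]

theorem symm_apply_of_even (hF : IsFourierPlancherel F) {f : Lp ℂ 2 (volume : Measure ℝ)}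
    (heven : ∀ᵐ x : ℝ, f (-x) = f x) : F.symm f = F f := by
  rw [F.symm_apply_eq, hF.apply_eq_fourierInv (F f), hF.apply_eq_fourierInv f,
    Lp.fourierInv_fourierInv, Lp.reflect_eq_self heven]

end IsFourierPlancherel

theorem eq_zero_and_eq_zero_of_add_conj_eq_zero {E : Type*} [NormedAddCommGroup E]
    [InnerProductSpace ℂ E] {P : E → E} (hP : ∀ x, inner ℂ (P x) x = (‖P x‖ ^ 2 : ℂ))
    (U : E ≃ₗᵢ[ℂ] E) {f : E} (h : P f + U (P (U.symm f)) = 0) :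
    P f = 0 ∧ P (U.symm f) = 0 := by
  have hconj : inner ℂ (U (P (U.symm f))) f = (‖P (U.symm f)‖ ^ 2 : ℂ) := by
    have hU := U.inner_map_map (P (U.symm f)) (U.symm f)
    rw [U.apply_symm_apply] at hU
    exact hU.trans (hP _)
  have hsum : (‖P f‖ ^ 2 + ‖P (U.symm f)‖ ^ 2 : ℂ) = 0 := by
    rw [← hP f, ← hconj, ← inner_add_left, h, inner_zero_left]
  have hsum' : ‖P f‖ ^ 2 + ‖P (U.symm f)‖ ^ 2 = 0 := by exact_mod_cast hsum
  rw [add_eq_zero_iff_of_nonneg (by positivity) (by positivity)] at hsum'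
  simpa using hsum'

theorem Pproj_coe (lam : ℝ) (u : Lp ℂ 2 (volume : Measure ℝ)) :
    (Pproj lam u : ℝ → ℂ) =ᵐ[volume] (Ioo (-lam) lam).indicator u :=
  MemLp.coeFn_toLp _

theorem Pproj_eq_zero_iff (lam : ℝ) (u : Lp ℂ 2 (volume : Measure ℝ)) :
    Pproj lam u = 0 ↔ ∀ᵐ x : ℝ, x ∈ Ioo (-lam) lam → u x = 0 := by
  rw [Lp.eq_zero_iff_ae_eq_zero]
  exact ⟨fun h ↦ ((Pproj_coe lam u).symm.trans h).mono fun _ ↦ indicator_apply_eq_zero.1,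
    fun h ↦ (Pproj_coe lam u).trans (h.mono fun _ ↦ indicator_apply_eq_zero.2)⟩

theorem inner_Pproj_self (lam : ℝ) (u : Lp ℂ 2 (volume : Measure ℝ)) :
    inner ℂ (Pproj lam u) u = (‖Pproj lam u‖ ^ 2 : ℂ) := by
  refine Eq.trans ?_ (inner_self_eq_norm_sq_to_K (Pproj lam u))
  rw [L2.inner_def, L2.inner_def]
  refine integral_congr_ae ?_
  filter_upwards [Pproj_coe lam u] with x hx
  by_cases hmem : x ∈ Ioo (-lam) lam <;> simp [hx, hmem]

theorem sonine_iff_ker_general (lam : ℝ)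
    (F : Lp ℂ 2 (volume : Measure ℝ) ≃ₗᵢ[ℂ] Lp ℂ 2 (volume : Measure ℝ))
    (hF : IsFourierPlancherel F)
    (f : Lp ℂ 2 (volume : Measure ℝ))
    (heven : ∀ᵐ x : ℝ, f (-x) = f x) :
    Pproj lam f + F (Pproj lam (F.symm f)) = 0 ↔
      ((∀ᵐ x : ℝ, x ∈ Ioo (-lam) lam → f x = 0) ∧
       (∀ᵐ x : ℝ, x ∈ Ioo (-lam) lam → (F f) x = 0)) := by
  rw [← Pproj_eq_zero_iff, ← Pproj_eq_zero_iff, ← hF.symm_apply_of_even heven]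
  refine ⟨eq_zero_and_eq_zero_of_add_conj_eq_zero (inner_Pproj_self lam) F, ?_⟩
  rintro ⟨hf, hFf⟩
  rw [hf, hFf, map_zero, add_zero]

/-- For even `f ∈ L²(ℝ)`: `P_λ f + ℱ P_λ ℱ⁻¹ f = 0` iff `f` is a Sonine function
(`f = 0` a.e. on `(−λ,λ)` and `ℱf = 0` a.e. on `(−λ,λ)`). -/
theorem sonine_iff_ker (lam : ℝ) (hlam : 0 < lam)
    (F : Lp ℂ 2 (volume : Measure ℝ) ≃ₗᵢ[ℂ] Lp ℂ 2 (volume : Measure ℝ))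
    (hF : IsFourierPlancherel F)
    (f : Lp ℂ 2 (volume : Measure ℝ))
    (heven : ∀ᵐ x : ℝ, f (-x) = f x) :
    Pproj lam f + F (Pproj lam (F.symm f)) = 0 ↔
      ((∀ᵐ x : ℝ, x ∈ Ioo (-lam) lam → f x = 0) ∧
       (∀ᵐ x : ℝ, x ∈ Ioo (-lam) lam → (F f) x = 0)) :=
  sonine_iff_ker_general lam F hF f heven
end
end

section
/- Let λ > 0 and let f ∈ L²(ℝ) be even and vanish a.e. outside (−λ,λ). Then for a.e. x ∈ (−λ,λ), (F_λ(F_λ f))(x) = ∫_{−λ}^{λ} (sin(2πλ(x−y))/(π(x−y))) f(y) dy; that is, on even functions supported in (−λ,λ) the operator D_λ = F_λ² coincides with the integral operator with Dirichlet kernel sin(2πλ(x−y))/(π(x−y)) restricted to (−λ,λ). -/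
/-! Put `f₀ = 1_{(-λ,λ)} f`: it is even, and integrable since it is square integrable on a
bounded interval. Evenness gives `𝓕⁻ f₀ = 𝓕 f₀`, so `D_λ f = 𝓕⁻ (1_{(-λ,λ)} · 𝓕 f₀)` on
`(-λ,λ)`. The multiplication formula `∫ 𝓕 g · φ = ∫ g · 𝓕 φ`, applied with
`φ = 1_{(-λ,λ)} e^{2πix·}`, turns this into `∫ f₀(y) 𝓕φ(y) dy`, and
`𝓕φ(y) = ∫_{-λ}^{λ} e^{2πi(x-y)v} dv` is the Dirichlet kernel at `x - y`. -/

open MeasureTheory Complex Set FourierTransform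

noncomputable section

open Real

def dirichletKernel (lam s : ℝ) : ℝ :=
  if s = 0 then 2 * lam else Real.sin (2 * π * lam * s) / (π * s)

theorem integral_Ioo_cexp_eq_dirichletKernel {lam : ℝ} (hlam : 0 ≤ lam) (s : ℝ) :
    ∫ t in Ioo (-lam) lam, cexp (↑(2 * π * s * t) * I) = dirichletKernel lam s := by
  rw [← integral_Ioc_eq_integral_Ioo, ← intervalIntegral.integral_of_le (by linarith)]
  rcases eq_or_ne s 0 with rfl | hs
  · simp [dirichletKernel]; ring
  have hc : (2 * π * s * I : ℂ) ≠ 0 := by simp [hs, pi_ne_zero]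
  have hexp (t : ℝ) : cexp (↑(2 * π * s * t) * I) = cexp (2 * π * s * I * t) := by
    push_cast; ring_nf
  simp_rw [hexp, integral_exp_mul_complex hc, dirichletKernel, if_neg hs]
  push_cast
  rw [div_eq_div_iff hc (by simp [hs, pi_ne_zero])]
  have hpos : 2 * π * s * I * lam = 2 * π * lam * s * I := by ring
  have hneg : 2 * π * s * I * -lam = -(2 * π * lam * s) * I := by ring
  rw [hpos, hneg]
  linear_combination (norm := ring_nf) (-(π * s * I) : ℂ) * Complex.two_sin (2 * π * lam * s)
  simp only [I_sq]; ring

theorem Continuous.integrable_indicator_Ioo {E : Type*} [NormedAddCommGroup E] {f : ℝ → E}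
    (hf : Continuous f) (a b : ℝ) : Integrable ((Ioo a b).indicator f) :=
  (hf.integrableOn_Icc.mono_set Ioo_subset_Icc_self).integrable_indicator measurableSet_Ioo

theorem fourier_indicator_Ioo_cexp {lam : ℝ} (hlam : 0 ≤ lam) (x y : ℝ) :
    𝓕 ((Ioo (-lam) lam).indicator fun v ↦ cexp (↑(2 * π * x * v) * I)) y =
      dirichletKernel lam (x - y) := by
  rw [Real.fourier_eq', ← integral_Ioo_cexp_eq_dirichletKernel hlam,
    ← integral_indicator measurableSet_Ioo]
  refine integral_congr_ae (.of_forall fun v ↦ ?_)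
  by_cases hv : v ∈ Ioo (-lam) lam
  · simp [hv, ← Complex.exp_add]; ring_nf
  · simp [hv]

theorem fourierInv_indicator_fourier {lam : ℝ} (hlam : 0 ≤ lam) {g : ℝ → ℂ}
    (hg : Integrable g) (x : ℝ) :
    𝓕⁻ ((Ioo (-lam) lam).indicator (𝓕 g)) x = ∫ y, dirichletKernel lam (x - y) * g y := by
  set φ : ℝ → ℂ := (Ioo (-lam) lam).indicator fun v ↦ cexp (↑(2 * π * x * v) * I)
  have hφ : Integrable φ := Continuous.integrable_indicator_Ioo (by fun_prop) _ _
  have hflip : (innerₗ ℝ).flip = innerₗ ℝ := LinearMap.ext₂ fun a b ↦ real_inner_comm a b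
  have key := VectorFourier.integral_fourierIntegral_smul_eq_flip (L := innerₗ ℝ)
    Real.continuous_fourierChar continuous_inner hg hφ
  rw [hflip] at key
  calc 𝓕⁻ ((Ioo (-lam) lam).indicator (𝓕 g)) x = ∫ v, 𝓕 g v • φ v := by
        rw [Real.fourierInv_eq']
        congr 1 with v
        by_cases hv : v ∈ Ioo (-lam) lam
        · simp [φ, hv]; ring_nf
        · simp [φ, hv]
    _ = ∫ y, g y • 𝓕 φ y := key
    _ = ∫ y, dirichletKernel lam (x - y) * g y := by
        congr 1 with y
        rw [fourier_indicator_Ioo_cexp hlam, smul_eq_mul, mul_comm]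

theorem fourierInv_eq_fourier_of_even {V E : Type*} [NormedAddCommGroup V]
    [InnerProductSpace ℝ V] [MeasurableSpace V] [BorelSpace V] [FiniteDimensional ℝ V]
    [NormedAddCommGroup E] [NormedSpace ℂ E] {g : V → E} (hg : ∀ᵐ x, g (-x) = g x) :
    𝓕⁻ g = 𝓕 g := by
  rw [Real.fourierInv_eq_fourier_comp_neg]
  exact funext (Real.fourier_congr_ae hg)

theorem MemLp.integrableOn_of_measure_ne_top {α E : Type*} [MeasurableSpace α] {μ : Measure α}
    [NormedAddCommGroup E] {p : ENNReal} {f : α → E} {s : Set α} (hp : 1 ≤ p) (hf : MemLp f p μ)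
    (hs : μ s ≠ ⊤) : IntegrableOn f s μ :=
  haveI : IsFiniteMeasure (μ.restrict s) := ⟨by simpa using hs.lt_top⟩
  (hf.restrict s).integrable hp

theorem coeFn_Pproj (lam : ℝ) (f : Lp ℂ 2 (volume : Measure ℝ)) :
    Pproj lam f =ᵐ[volume] (Ioo (-lam) lam).indicator f :=
  MemLp.coeFn_toLp _

theorem Pproj_Pproj (lam : ℝ) (f : Lp ℂ 2 (volume : Measure ℝ)) :
    Pproj lam (Pproj lam f) = Pproj lam f := by
  refine Lp.ext ?_
  filter_upwards [coeFn_Pproj lam (Pproj lam f), coeFn_Pproj lam f] with x h₁ h₂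
  by_cases hx : x ∈ Ioo (-lam) lam <;> simp [h₁, h₂, hx]

theorem IsFourierPlancherel.ae_eq_fourierInv
    {F : Lp ℂ 2 (volume : Measure ℝ) ≃ₗᵢ[ℂ] Lp ℂ 2 (volume : Measure ℝ)}
    (hF : IsFourierPlancherel F) {h : Lp ℂ 2 (volume : Measure ℝ)} {g : ℝ → ℂ}
    (hg : Integrable g) (hhg : h =ᵐ[volume] g) : F h =ᵐ[volume] 𝓕⁻ g := by
  have hg₂ : MemLp g 2 volume := (Lp.memLp h).ae_eq hhg
  rw [show h = hg₂.toLp g from Lp.ext (hhg.trans hg₂.coeFn_toLp.symm)]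
  exact hF g hg hg₂

theorem Dlambda_dirichlet_kernel_general (lam : ℝ) (hlam : 0 < lam)
    (F : Lp ℂ 2 (volume : Measure ℝ) ≃ₗᵢ[ℂ] Lp ℂ 2 (volume : Measure ℝ))
    (hF : IsFourierPlancherel F)
    (f : Lp ℂ 2 (volume : Measure ℝ))
    (heven : ∀ᵐ x : ℝ, f (-x) = f x) :
    ∀ᵐ x : ℝ, x ∈ Ioo (-lam) lam →
      (Pproj lam (F (Pproj lam (Pproj lam (F (Pproj lam f)))))) x =
        ∫ y in Ioo (-lam) lam,
          (((if x = y then 2 * lam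
              else Real.sin (2 * Real.pi * lam * (x - y)) / (Real.pi * (x - y))) : ℝ) : ℂ)
            * f y := by
  set f₀ := (Ioo (-lam) lam).indicator (f : ℝ → ℂ)
  set g₀ := (Ioo (-lam) lam).indicator (𝓕 f₀)
  have hf₀ : Integrable f₀ :=
    (MemLp.integrableOn_of_measure_ne_top one_le_two (Lp.memLp f) (by simp)).integrable_indicator
      measurableSet_Ioo
  have hf₀_even : ∀ᵐ y, f₀ (-y) = f₀ y := by
    filter_upwards [heven] with y hy
    simp only [f₀, indicator, mem_Ioo, hy, neg_lt_neg_iff, neg_lt, and_comm]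
  have hg₀ : Integrable g₀ :=
    (VectorFourier.fourierIntegral_continuous Real.continuous_fourierChar continuous_inner
      hf₀).integrable_indicator_Ioo _ _
  have hFf : F (Pproj lam f) =ᵐ[volume] 𝓕 f₀ := by
    rw [← fourierInv_eq_fourier_of_even hf₀_even]
    exact hF.ae_eq_fourierInv hf₀ (coeFn_Pproj lam f)
  have hPFf : Pproj lam (Pproj lam (F (Pproj lam f))) =ᵐ[volume] g₀ := by
    rw [Pproj_Pproj]
    filter_upwards [coeFn_Pproj lam (F (Pproj lam f)), hFf] with y h₁ h₂
    by_cases hy : y ∈ Ioo (-lam) lam <;> simp [h₁, h₂, g₀, hy]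
  filter_upwards [coeFn_Pproj lam (F _), hF.ae_eq_fourierInv hg₀ hPFf] with x h₁ h₂ hx
  rw [h₁, indicator_of_mem hx, h₂, fourierInv_indicator_fourier hlam.le hf₀,
    ← integral_indicator measurableSet_Ioo]
  refine integral_congr_ae (.of_forall fun y ↦ ?_)
  by_cases hy : y ∈ Ioo (-lam) lam
  · simp [f₀, hy, dirichletKernel, sub_eq_zero]
  · simp [f₀, hy]

/-- On even functions supported in `(−λ,λ)` the operator `D_λ = F_λ²` is the integral
operator with the Dirichlet kernel `sin(2πλ(x−y))/(π(x−y))` on `(−λ,λ)`. -/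
theorem Dlambda_dirichlet_kernel (lam : ℝ) (hlam : 0 < lam)
    (F : Lp ℂ 2 (volume : Measure ℝ) ≃ₗᵢ[ℂ] Lp ℂ 2 (volume : Measure ℝ))
    (hF : IsFourierPlancherel F)
    (f : Lp ℂ 2 (volume : Measure ℝ))
    (heven : ∀ᵐ x : ℝ, f (-x) = f x)
    (hsupp : ∀ᵐ x : ℝ, x ∉ Ioo (-lam) lam → f x = 0) :
    ∀ᵐ x : ℝ, x ∈ Ioo (-lam) lam →
      (Pproj lam (F (Pproj lam (Pproj lam (F (Pproj lam f)))))) x =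
        ∫ y in Ioo (-lam) lam,
          (((if x = y then 2 * lam
              else Real.sin (2 * Real.pi * lam * (x - y)) / (Real.pi * (x - y))) : ℝ) : ℂ)
            * f y :=
  Dlambda_dirichlet_kernel_general lam hlam F hF f heven
end
end
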